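/- arXiv:1301.6596 — 3 statements merged into one kernel-verified Lean document; each statement's English description precedes it below -/
import Mathlib

section
/- Let Ω₁ and Ω₂ be finite sets of real numbers and let a, b : ℝ → ℂ be coefficient functions. For the trigonometric polynomials x(t) = Σ_{ω ∈ Ω₁} a(ω) e^{iωt} and y(t) = Σ_{ν ∈ Ω₂} b(ν) e^{iνt}, the averaged integral (1/(2T)) ∫_{-T}^{T} x(t) · conj(y(t)) dt tends, as T → ∞, to Σ_{ω ∈ Ω₁ ∩ Ω₂} a(ω) · conj(b(ω)). -/
/-!
Expanding the product, `x(t) · conj (y(t)) = Σ_{ω, ν} a(ω) conj (b(ν)) e^{i(ω - ν)t}`. The average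
of `e^{iμt}` over `[-T, T]` is `1` when `μ = 0`; otherwise the integral
`(e^{iμT} - e^{-iμT}) / (iμ)` stays bounded by `2 / |μ|`, so the average is `O(1/T)`. Only the
diagonal terms `ω = ν ∈ Ω₁ ∩ Ω₂` survive in the limit.
-/

open Filter intervalIntegral

open Complex in
theorem conj_cexp_I_mul_ofReal_mul (ν t : ℝ) :
    starRingEnd ℂ (exp (I * ν * t)) = exp (I * (-ν : ℝ) * t) := by
  rw [← exp_conj]
  simp [conj_I]

noncomputable def symmetricAverage (f : ℝ → ℂ) (T : ℝ) : ℂ :=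
  (1 / (2 * (T : ℂ))) * ∫ t in (-T)..T, f t

theorem symmetricAverage_finsetSum {ι : Type*} (s : Finset ι) (f : ι → ℝ → ℂ)
    (hf : ∀ i ∈ s, Continuous (f i)) (T : ℝ) :
    symmetricAverage (fun t => ∑ i ∈ s, f i t) T = ∑ i ∈ s, symmetricAverage (f i) T := by
  simp only [symmetricAverage]
  rw [integral_finsetSum fun i hi => (hf i hi).intervalIntegrable _ _, Finset.mul_sum]

theorem symmetricAverage_const_mul (c : ℂ) (f : ℝ → ℂ) (T : ℝ) :
    symmetricAverage (fun t => c * f t) T = c * symmetricAverage f T := by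
  simp only [symmetricAverage, intervalIntegral.integral_const_mul]
  ring

open Complex in
theorem norm_integral_cexp_I_mul_le {μ : ℝ} (hμ : μ ≠ 0) (T : ℝ) :
    ‖∫ t in (-T)..T, exp (I * μ * t)‖ ≤ 2 / |μ| := by
  have hc : I * μ ≠ 0 := mul_ne_zero I_ne_zero (ofReal_ne_zero.mpr hμ)
  rw [integral_exp_mul_complex hc, norm_div, norm_mul, norm_I, norm_real, one_mul,
    Real.norm_eq_abs]
  gcongr
  calc ‖exp (I * μ * T) - exp (I * μ * (-T : ℝ))‖
      ≤ ‖exp (I * (μ * T : ℝ))‖ + ‖exp (I * (μ * -T : ℝ))‖ := by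
        push_cast; rw [← mul_assoc, ← mul_assoc]; exact norm_sub_le _ _
    _ = 2 := by rw [norm_exp_I_mul_ofReal, norm_exp_I_mul_ofReal]; norm_num

open Complex in
theorem tendsto_symmetricAverage_cexp_I_mul (μ : ℝ) :
    Tendsto (symmetricAverage fun t => exp (I * μ * t)) atTop
      (nhds (if μ = 0 then 1 else 0)) := by
  split_ifs with hμ
  · refine tendsto_const_nhds.congr' ?_
    filter_upwards [eventually_ne_atTop 0] with T hT
    have hT' : (T : ℂ) ≠ 0 := ofReal_ne_zero.mpr hT
    simp only [symmetricAverage, hμ, ofReal_zero, mul_zero, zero_mul, exp_zero,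
      intervalIntegral.integral_const, sub_neg_eq_add, real_smul, mul_one]
    field_simp
    push_cast
    ring
  · have hinv : Tendsto (fun T : ℝ => 1 / (2 * (T : ℂ))) atTop (nhds 0) := by
      have h := (continuous_ofReal.tendsto 0).comp
        (tendsto_const_nhds.div_atTop (tendsto_id.const_mul_atTop two_pos) : Tendsto
          (fun T : ℝ => 1 / (2 * T)) atTop (nhds 0))
      simpa [Function.comp_def] using h
    refine hinv.zero_mul_isBoundedUnder_le ⟨2 / |μ|, ?_⟩
    exact eventually_map.mpr (Eventually.of_forall (norm_integral_cexp_I_mul_le hμ))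

open Complex in
theorem trigPoly_mul_conj_trigPoly (Ω₁ Ω₂ : Finset ℝ) (a b : ℝ → ℂ) (t : ℝ) :
    (∑ ω ∈ Ω₁, a ω * exp (I * ω * t)) * starRingEnd ℂ (∑ ν ∈ Ω₂, b ν * exp (I * ν * t)) =
      ∑ ω ∈ Ω₁, ∑ ν ∈ Ω₂, a ω * starRingEnd ℂ (b ν) * exp (I * (ω - ν : ℝ) * t) := by
  rw [map_sum, Finset.sum_mul_sum]
  refine Finset.sum_congr rfl fun ω _ => Finset.sum_congr rfl fun ν _ => ?_
  rw [map_mul, conj_cexp_I_mul_ofReal_mul, mul_mul_mul_comm, ← exp_add]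
  push_cast
  ring_nf

/-- For trigonometric polynomials `x(t) = Σ_{ω ∈ Ω₁} a(ω) e^{iωt}` and
`y(t) = Σ_{ν ∈ Ω₂} b(ν) e^{iνt}`, the averaged integral
`(1/(2T)) ∫_{-T}^{T} x(t) ⬝ conj(y(t)) dt` tends, as `T → ∞`, to
`Σ_{ω ∈ Ω₁ ∩ Ω₂} a(ω) ⬝ conj(b(ω))`. -/
theorem besicovitch_inner_trigPoly (Ω₁ Ω₂ : Finset ℝ) (a b : ℝ → ℂ) :
    Tendsto
      (fun T : ℝ => (1 / (2 * (T : ℂ))) *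
        ∫ t in (-T)..T,
          (∑ ω ∈ Ω₁, a ω * Complex.exp (Complex.I * ω * t)) *
            starRingEnd ℂ (∑ ν ∈ Ω₂, b ν * Complex.exp (Complex.I * ν * t)))
      atTop (nhds (∑ ω ∈ Ω₁ ∩ Ω₂, a ω * starRingEnd ℂ (b ω))) := by
  have havg : (symmetricAverage fun t => ∑ ω ∈ Ω₁, ∑ ν ∈ Ω₂,
        a ω * starRingEnd ℂ (b ν) * Complex.exp (Complex.I * (ω - ν : ℝ) * t)) =
      fun T => ∑ ω ∈ Ω₁, ∑ ν ∈ Ω₂, a ω * starRingEnd ℂ (b ν) *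
        symmetricAverage (fun t => Complex.exp (Complex.I * (ω - ν : ℝ) * t)) T := by
    funext T
    rw [symmetricAverage_finsetSum _ _ fun _ _ => by fun_prop]
    refine Finset.sum_congr rfl fun ω _ => ?_
    rw [symmetricAverage_finsetSum _ _ fun _ _ => by fun_prop]
    simp only [symmetricAverage_const_mul]
  have hlim := tendsto_finsetSum Ω₁ fun ω _ => tendsto_finsetSum Ω₂ fun ν _ =>
    (tendsto_symmetricAverage_cexp_I_mul (ω - ν)).const_mul (a ω * starRingEnd ℂ (b ν))
  simp only [sub_eq_zero, mul_ite, mul_one, mul_zero, Finset.sum_ite_eq, Finset.sum_ite_mem,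
    ← havg] at hlim
  show Tendsto (symmetricAverage _) _ _
  simpa only [trigPoly_mul_conj_trigPoly] using hlim
end

section
/- Let Ω₁ and Ω₂ be finite sets of real numbers. Suppose that for every pair of coefficient functions a, b : ℝ → ℂ the trigonometric polynomials x(t) = Σ_{ω ∈ Ω₁} a(ω) e^{iωt} and y(t) = Σ_{ν ∈ Ω₂} b(ν) e^{iνt} are orthogonal in the Besicovitch sense, i.e. (1/(2T)) ∫_{-T}^{T} x(t) · conj(y(t)) dt tends to 0 as T → ∞. Then Ω₁ ∩ Ω₂ = ∅. -/
open Filter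

/-! A common frequency `ω` would give the test pair `x = y = e^{iωt}`, for which
`x · conj y = 1` has Besicovitch mean `1`, not `0`. -/

theorem Finset.sum_pi_single_one_mul {ι R : Type*} [DecidableEq ι] [NonAssocSemiring R]
    {s : Finset ι} {i : ι} (hi : i ∈ s) (f : ι → R) :
    ∑ j ∈ s, (Pi.single i 1 : ι → R) j * f j = f i := by
  simp [Pi.single_apply, hi]

theorem Complex.exp_mul_conj_exp (z : ℂ) :
    Complex.exp z * starRingEnd ℂ (Complex.exp z) = Complex.exp (2 * z.re) := by
  rw [← Complex.exp_conj, ← Complex.exp_add, Complex.add_conj,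
    Complex.ofReal_mul, Complex.ofReal_ofNat]

theorem tendsto_symmetric_mean_const (c : ℂ) :
    Tendsto (fun T : ℝ => (1 / (2 * (T : ℂ))) * ∫ _ in (-T)..T, c) atTop (nhds c) := by
  refine tendsto_const_nhds.congr' ?_
  filter_upwards [eventually_gt_atTop (0 : ℝ)] with T hT
  have hT' : (T : ℂ) ≠ 0 := Complex.ofReal_ne_zero.mpr hT.ne'
  rw [intervalIntegral.integral_const, Complex.real_smul]
  push_cast
  field_simp
  ring

/-- Theorem 1 of the paper: if for every pair of coefficient functions the
trigonometric polynomials built on the finite frequency sets `Ω₁` and `Ω₂` are orthogonal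
in the Besicovitch sense, then `Ω₁ ∩ Ω₂ = ∅`. -/
theorem besicovitch_orthogonal_imp_disjoint_freq (Ω₁ Ω₂ : Finset ℝ)
    (h : ∀ a b : ℝ → ℂ,
      Tendsto
        (fun T : ℝ => (1 / (2 * (T : ℂ))) *
          ∫ t in (-T)..T,
            (∑ ω ∈ Ω₁, a ω * Complex.exp (Complex.I * ω * t)) *
              starRingEnd ℂ (∑ ν ∈ Ω₂, b ν * Complex.exp (Complex.I * ν * t)))
        atTop (nhds 0)) :
    Ω₁ ∩ Ω₂ = ∅ := by
  refine Finset.eq_empty_of_forall_notMem fun ω hω => ?_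
  obtain ⟨hω₁, hω₂⟩ := Finset.mem_inter.mp hω
  have hunimodular (t : ℝ) : Complex.exp (Complex.I * ω * t) *
      starRingEnd ℂ (Complex.exp (Complex.I * ω * t)) = 1 := by
    simp [Complex.exp_mul_conj_exp]
  have hmean := h (Pi.single ω 1) (Pi.single ω 1)
  simp only [Finset.sum_pi_single_one_mul hω₁, Finset.sum_pi_single_one_mul hω₂,
    hunimodular] at hmean
  exact one_ne_zero (tendsto_nhds_unique (tendsto_symmetric_mean_const 1) hmean)
end

section
/- Let k ∈ L¹(ℝ, ℂ), let Ω ⊆ ℝ be a finite set, let a : ℝ → ℂ, let x(t) = Σ_{ω ∈ Ω} a(ω) e^{iωt}, and let y = k ⋆ x be the convolution. Then for every ν ∈ ℝ the Besicovitch–Fourier coefficient of y at frequency ν, namely the limit as T → ∞ of (1/(2T)) ∫_{-T}^{T} y(t) e^{-iνt} dt, equals K(ν) · a(ν) if ν ∈ Ω and 0 otherwise, where K(ν) = ∫_{ℝ} k(τ) e^{-iντ} dτ. In particular, if a(ω) ≠ 0 and K(ω) ≠ 0 for all ω ∈ Ω, then the set of frequencies at which y has a nonzero Besicovitch–Fourier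 coefficient is exactly Ω, i.e. the frequency sets of the image and the preimage coincide. -/
/-!
Convolution with `k` is diagonal on the exponentials: `k ⋆ e^{iω·} = K(ω) e^{iω·}`, so `y` is
again a trigonometric polynomial on `Ω`, with coefficients `K(ω) a(ω)`. Its Besicovitch–Fourier
coefficients are then read off from the orthogonality of exponentials in the mean:
`(1/(2T)) ∫_{-T}^{T} e^{iμt} dt` tends to `1` if `μ = 0` and is `O(1/T)` otherwise.
-/

open Filter MeasureTheory Complex Topology

noncomputable section

/-- The Besicovitch mean `M{f}` is the limit of `symmetricMean f T` as `T → ∞`. -/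
def symmetricMean (f : ℝ → ℂ) (T : ℝ) : ℂ :=
  1 / (2 * (T : ℂ)) * ∫ t in (-T)..T, f t

def trigPoly (Ω : Finset ℝ) (c : ℝ → ℂ) (t : ℝ) : ℂ :=
  ∑ ω ∈ Ω, c ω * exp (I * ω * t)

end

lemma norm_exp_I_mul_ofReal_mul_ofReal (ω t : ℝ) : ‖exp (I * ω * t)‖ = 1 := by
  rw [mul_assoc, ← ofReal_mul, norm_exp_I_mul_ofReal]

lemma tendsto_one_div_two_mul_ofReal_atTop :
    Tendsto (fun T : ℝ => 1 / (2 * (T : ℂ))) atTop (𝓝 0) := by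
  have h : Tendsto (fun T : ℝ => ((2 * T)⁻¹ : ℝ)) atTop (𝓝 0) :=
    tendsto_inv_atTop_zero.comp (tendsto_id.const_mul_atTop two_pos)
  simpa [Function.comp_def] using (continuous_ofReal.tendsto 0).comp h

lemma symmetricMean_finset_sum {ι : Type*} (s : Finset ι) (c : ι → ℂ) {f : ι → ℝ → ℂ}
    (hf : ∀ i ∈ s, Continuous (f i)) (T : ℝ) :
    symmetricMean (fun t => ∑ i ∈ s, c i * f i t) T = ∑ i ∈ s, c i * symmetricMean (f i) T := by
  simp only [symmetricMean]
  rw [intervalIntegral.integral_finsetSum fun i hi =>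
    ((hf i hi).intervalIntegrable _ _).const_mul _, Finset.mul_sum]
  refine Finset.sum_congr rfl fun i _ => ?_
  rw [intervalIntegral.integral_const_mul]
  ring

lemma symmetricMean_one {T : ℝ} (hT : T ≠ 0) : symmetricMean (fun _ => 1) T = 1 := by
  have : (T : ℂ) ≠ 0 := ofReal_ne_zero.mpr hT
  simp only [symmetricMean, intervalIntegral.integral_const, sub_neg_eq_add, real_smul]
  push_cast
  field_simp
  ring

lemma norm_integral_exp_I_mul_le {μ : ℝ} (hμ : μ ≠ 0) (T : ℝ) :
    ‖∫ t in (-T)..T, exp (I * μ * t)‖ ≤ 2 / ‖I * (μ : ℂ)‖ := by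
  have hc : I * (μ : ℂ) ≠ 0 := mul_ne_zero I_ne_zero (ofReal_ne_zero.mpr hμ)
  rw [integral_exp_mul_complex hc, norm_div]
  gcongr
  calc ‖exp (I * μ * T) - exp (I * μ * ↑(-T))‖
      ≤ ‖exp (I * μ * T)‖ + ‖exp (I * μ * ↑(-T))‖ := norm_sub_le _ _
    _ = 2 := by simp only [norm_exp_I_mul_ofReal_mul_ofReal]; norm_num

lemma tendsto_symmetricMean_exp_I_mul (μ : ℝ) :
    Tendsto (symmetricMean fun t => exp (I * μ * t)) atTop (𝓝 (if μ = 0 then 1 else 0)) := by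
  split_ifs with hμ
  · subst hμ
    refine tendsto_const_nhds.congr' ?_
    filter_upwards [eventually_ne_atTop 0] with T hT
    simpa using (symmetricMean_one hT).symm
  · exact tendsto_one_div_two_mul_ofReal_atTop.zero_mul_isBoundedUnder_le
      (isBoundedUnder_of ⟨_, norm_integral_exp_I_mul_le hμ⟩)

lemma trigPoly_mul_exp_neg_I_mul (Ω : Finset ℝ) (c : ℝ → ℂ) (ν t : ℝ) :
    trigPoly Ω c t * exp (-(I * ν * t)) = ∑ ω ∈ Ω, c ω * exp (I * ↑(ω - ν) * t) := by
  rw [trigPoly, Finset.sum_mul]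
  refine Finset.sum_congr rfl fun ω _ => ?_
  rw [mul_assoc, ← exp_add]
  push_cast
  ring_nf

theorem tendsto_symmetricMean_trigPoly_mul_exp (Ω : Finset ℝ) (c : ℝ → ℂ) (ν : ℝ) :
    Tendsto (symmetricMean fun t => trigPoly Ω c t * exp (-(I * ν * t))) atTop
      (𝓝 (if ν ∈ Ω then c ν else 0)) := by
  have hsum : Tendsto (fun T => ∑ ω ∈ Ω, c ω * symmetricMean (fun t => exp (I * ↑(ω - ν) * t)) T)
      atTop (𝓝 (∑ ω ∈ Ω, c ω * if ω - ν = 0 then 1 else 0)) :=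
    tendsto_finsetSum _ fun ω _ => (tendsto_symmetricMean_exp_I_mul (ω - ν)).const_mul _
  simp only [sub_eq_zero, mul_ite, mul_one, mul_zero, Finset.sum_ite_eq'] at hsum
  refine hsum.congr fun T => ?_
  simp only [trigPoly_mul_exp_neg_I_mul]
  exact (symmetricMean_finset_sum Ω c (fun _ _ => by fun_prop) T).symm

lemma integral_mul_exp_I_mul_sub (k : ℝ → ℂ) (ω t : ℝ) :
    ∫ τ, k τ * exp (I * ω * ↑(t - τ)) =
      (∫ τ, k τ * exp (-(I * ω * τ))) * exp (I * ω * t) := by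
  rw [← integral_mul_const]
  congr 1 with τ
  rw [mul_assoc (k τ), ← exp_add]
  push_cast
  ring_nf

theorem integral_mul_trigPoly_sub {k : ℝ → ℂ} (hk : Integrable k) (Ω : Finset ℝ) (a : ℝ → ℂ)
    (t : ℝ) :
    ∫ τ, k τ * trigPoly Ω a (t - τ) =
      trigPoly Ω (fun ω => (∫ τ, k τ * exp (-(I * ω * τ))) * a ω) t := by
  have hint (ω : ℝ) : Integrable fun τ => k τ * exp (I * ω * ↑(t - τ)) :=
    hk.mul_bdd (by fun_prop) (Eventually.of_forall fun τ =>
      (norm_exp_I_mul_ofReal_mul_ofReal ω (t - τ)).le)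
  simp only [trigPoly, Finset.mul_sum, mul_left_comm (k _)]
  rw [integral_finsetSum _ fun ω _ => (hint ω).const_mul _]
  refine Finset.sum_congr rfl fun ω _ => ?_
  rw [integral_const_mul, integral_mul_exp_I_mul_sub]
  ring

lemma setOf_exists_ne_zero_tendsto_eq {α β M : Type*} [DecidableEq α] [TopologicalSpace M]
    [T2Space M] [Zero M] {F : α → β → M} {l : Filter β} [l.NeBot] {s : Finset α} {b : α → M}
    (hF : ∀ ν, Tendsto (F ν) l (𝓝 (if ν ∈ s then b ν else 0)))
    (hb : ∀ ν ∈ s, b ν ≠ 0) :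
    {ν | ∃ c : M, c ≠ 0 ∧ Tendsto (F ν) l (𝓝 c)} = ↑s := by
  ext ν
  simp only [Set.mem_ofPred_eq, Finset.mem_coe]
  constructor
  · rintro ⟨c, hc, hν⟩
    by_contra hνs
    exact hc (tendsto_nhds_unique hν (by simpa [hνs] using hF ν))
  · intro hνs
    exact ⟨b ν, hb ν hνs, by simpa [hνs] using hF ν⟩

/-- Corollary of Theorem 2 of the paper: For `y = k ⋆ x` the convolution
of an integrable kernel `k` with the trigonometric polynomial
`x(t) = Σ_{ω ∈ Ω} a(ω) e^{iωt}`, the Besicovitch–Fourier coefficient of `y` at every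
frequency `ν`, namely `lim_{T → ∞} (1/(2T)) ∫_{-T}^{T} y(t) e^{-iνt} dt`, equals
`K(ν) ⬝ a(ν)` if `ν ∈ Ω` and `0` otherwise, where `K(ν) = ∫_ℝ k(τ) e^{-iντ} dτ`.
In particular, if `a(ω) ≠ 0` and `K(ω) ≠ 0` for all `ω ∈ Ω`, then the set of
frequencies at which `y` has a nonzero Besicovitch–Fourier coefficient is exactly `Ω`:
the frequency sets of the image and the preimage coincide. -/
theorem besicovitch_fourier_coeff_of_convolution (k : ℝ → ℂ) (hk : Integrable k)
    (Ω : Finset ℝ) (a : ℝ → ℂ)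
    (x : ℝ → ℂ) (hx : x = fun t : ℝ => ∑ ω ∈ Ω, a ω * Complex.exp (Complex.I * ω * t))
    (y : ℝ → ℂ) (hy : y = fun t : ℝ => ∫ τ : ℝ, k τ * x (t - τ))
    (K : ℝ → ℂ) (hK : K = fun ν : ℝ => ∫ τ : ℝ, k τ * Complex.exp (-(Complex.I * ν * τ))) :
    (∀ ν : ℝ,
      Tendsto
        (fun T : ℝ => (1 / (2 * (T : ℂ))) *
          ∫ t in (-T)..T, y t * Complex.exp (-(Complex.I * ν * t)))
        atTop (nhds (if ν ∈ Ω then K ν * a ν else 0))) ∧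
    ((∀ ω ∈ Ω, a ω ≠ 0) → (∀ ω ∈ Ω, K ω ≠ 0) →
      {ν : ℝ | ∃ c : ℂ, c ≠ 0 ∧
        Tendsto
          (fun T : ℝ => (1 / (2 * (T : ℂ))) *
            ∫ t in (-T)..T, y t * Complex.exp (-(Complex.I * ν * t)))
          atTop (nhds c)} = ↑Ω) := by
  have hy_trigPoly : y = trigPoly Ω fun ω => K ω * a ω := by
    subst hx hy hK
    funext t
    exact integral_mul_trigPoly_sub hk Ω a t
  have hcoeff (ν : ℝ) := tendsto_symmetricMean_trigPoly_mul_exp Ω (fun ω => K ω * a ω) ν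
  rw [← hy_trigPoly] at hcoeff
  exact ⟨hcoeff, fun ha hK0 =>
    setOf_exists_ne_zero_tendsto_eq hcoeff fun ω hω => mul_ne_zero (hK0 ω hω) (ha ω hω)⟩
end
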